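/- For every real number a > 0, the integral ∫_{Ω_n} ‖Dφ_a(x)‖^n dx is finite, and moreover ∫_{Ω_n} ‖Dφ_a(x)‖^n dx ≤ ( Σ_{i=1}^{n-1} (aγ_i − 1)^2 + n − 1 + a^2 )^{n/2} / (n·a). -/

import Mathlib

open MeasureTheory Real Finset
open scoped ENNReal BigOperators

noncomputable section

/-- The model Lipschitz domain `Ω_n` (dimension `n+1`): `0 < x_last < 1` and
`0 < x_i < x_last` for the first `n` coordinates. -/
def OmegaModel (n : ℕ) : Set (EuclideanSpace ℝ (Fin (n + 1))) :=
  {x | 0 < x (Fin.last n) ∧ x (Fin.last n) < 1 ∧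
    ∀ i : Fin n, 0 < x i.castSucc ∧ x i.castSucc < x (Fin.last n)}

/-- The outward cuspidal domain `Ω_γ` (dimension `n+1`) with Hölder exponents `γi`. -/
def OmegaGamma (n : ℕ) (γi : Fin n → ℝ) : Set (EuclideanSpace ℝ (Fin (n + 1))) :=
  {x | 0 < x (Fin.last n) ∧ x (Fin.last n) < 1 ∧
    ∀ i : Fin n, 0 < x i.castSucc ∧ x i.castSucc < x (Fin.last n) ^ γi i}

/-- The cusp map `φ_a(x) = (x_1 x_last^{aγ_1-1}, …, x_n x_last^{aγ_n-1}, x_last^a)`. -/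
def phiMap (n : ℕ) (γi : Fin n → ℝ) (a : ℝ)
    (x : EuclideanSpace ℝ (Fin (n + 1))) : EuclideanSpace ℝ (Fin (n + 1)) :=
  WithLp.toLp 2 (fun j => Fin.lastCases (x (Fin.last n) ^ a)
    (fun i => x i.castSucc * x (Fin.last n) ^ (a * γi i - 1)) j)

/-!
Write `t = x (Fin.last n)`, so that `x ∈ OmegaModel n` means `0 < x_i < t < 1`. Every entry of
`Dφ_a(x)` is at most a constant times `T = t ^ (a - 1)`: the entries `t ^ (aγ_i - 1)` and
`x_i (aγ_i - 1) t ^ (aγ_i - 2)` because `x_i < t < 1` and `aγ_i - 1 ≥ a - 1`. Bounding the operator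
norm by the Hilbert–Schmidt norm gives `‖Dφ_a(x)‖ ≤ √K T` with `K = Σ (aγ_i - 1)² + n + a²`, hence
`‖Dφ_a(x)‖ ^ (n + 1) ≤ K ^ ((n + 1) / 2) t ^ ((a - 1)(n + 1))`. Slicing `OmegaModel n` at height `t`
gives a cube of volume `t ^ n`, so the right-hand side integrates to
`K ^ ((n + 1) / 2) ∫₀¹ t ^ ((n + 1) a - 1) dt = K ^ ((n + 1) / 2) / ((n + 1) a)`.
-/

lemma EuclideanSpace.sq_add_sq_le_norm_sq {ι : Type*} [Fintype ι] (v : EuclideanSpace ℝ ι)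
    {k l : ι} (hkl : k ≠ l) : v k ^ 2 + v l ^ 2 ≤ ‖v‖ ^ 2 := by
  classical
  rw [EuclideanSpace.norm_sq_eq, ← Finset.sum_pair (f := fun j => v j ^ 2) hkl]
  simpa only [Real.norm_eq_abs, sq_abs] using
    Finset.sum_le_univ_sum_of_nonneg (s := {k, l}) fun j => sq_nonneg (v j)

lemma EuclideanSpace.sq_apply_le_norm_sq {ι : Type*} [Fintype ι] (v : EuclideanSpace ℝ ι)
    (k : ι) : v k ^ 2 ≤ ‖v‖ ^ 2 := by
  simpa only [Real.norm_eq_abs, sq_abs] using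
    pow_le_pow_left₀ (norm_nonneg _) (PiLp.norm_apply_le v k) 2

lemma ContinuousLinearMap.opNorm_le_sqrt_sum_of_sq_apply_le {E ι : Type*}
    [NormedAddCommGroup E] [NormedSpace ℝ E] [Fintype ι]
    (L : E →L[ℝ] EuclideanSpace ℝ ι) (c : ι → ℝ) (h : ∀ v j, L v j ^ 2 ≤ c j * ‖v‖ ^ 2) :
    ‖L‖ ≤ √(∑ j, c j) := by
  refine L.opNorm_le_bound (Real.sqrt_nonneg _) fun v => ?_
  calc ‖L v‖ = √(∑ j, L v j ^ 2) := by
        simp only [EuclideanSpace.norm_eq, Real.norm_eq_abs, sq_abs]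
    _ ≤ √((∑ j, c j) * ‖v‖ ^ 2) := by
        rw [Finset.sum_mul]
        exact Real.sqrt_le_sqrt (Finset.sum_le_sum fun j _ => h v j)
    _ = √(∑ j, c j) * ‖v‖ := by
        rw [Real.sqrt_mul' _ (by positivity), Real.sqrt_sq (norm_nonneg v)]

lemma fderiv_apply_of_hasFDerivAt_apply {E ι : Type*} [NormedAddCommGroup E] [NormedSpace ℝ E]
    [Fintype ι] {f : E → EuclideanSpace ℝ ι} {x : E} (hf : DifferentiableAt ℝ f x) {j : ι}
    {ℓ : E →L[ℝ] ℝ} (hj : HasFDerivAt (fun y => f y j) ℓ x) (v : E) :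
    fderiv ℝ f x v j = ℓ v :=
  congrArg (· v) (((EuclideanSpace.proj (𝕜 := ℝ) j).hasFDerivAt.comp x hf.hasFDerivAt).unique hj :)

section Derivative

variable {n : ℕ} (γi : Fin n → ℝ) (a : ℝ)

@[simp] lemma phiMap_apply_last (x : EuclideanSpace ℝ (Fin (n + 1))) :
    phiMap n γi a x (Fin.last n) = x (Fin.last n) ^ a := by
  simp [phiMap]

@[simp] lemma phiMap_apply_castSucc (x : EuclideanSpace ℝ (Fin (n + 1))) (i : Fin n) :
    phiMap n γi a x i.castSucc = x i.castSucc * x (Fin.last n) ^ (a * γi i - 1) := by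
  simp [phiMap]

variable {γi a} {x : EuclideanSpace ℝ (Fin (n + 1))}

lemma hasFDerivAt_phiMap_last (hx : x (Fin.last n) ≠ 0) :
    HasFDerivAt (fun y => phiMap n γi a y (Fin.last n))
      ((a * x (Fin.last n) ^ (a - 1)) • EuclideanSpace.proj (𝕜 := ℝ) (Fin.last n)) x := by
  simp only [phiMap_apply_last]
  exact (Real.hasDerivAt_rpow_const (Or.inl hx)).comp_hasFDerivAt x
    (EuclideanSpace.proj (𝕜 := ℝ) (Fin.last n)).hasFDerivAt

lemma hasFDerivAt_phiMap_castSucc (hx : x (Fin.last n) ≠ 0) (i : Fin n) :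
    HasFDerivAt (fun y => phiMap n γi a y i.castSucc)
      (x i.castSucc • ((a * γi i - 1) * x (Fin.last n) ^ (a * γi i - 1 - 1)) •
          EuclideanSpace.proj (𝕜 := ℝ) (Fin.last n) +
        x (Fin.last n) ^ (a * γi i - 1) • EuclideanSpace.proj (𝕜 := ℝ) i.castSucc) x := by
  simp only [phiMap_apply_castSucc]
  have hpow := (Real.hasDerivAt_rpow_const (p := a * γi i - 1) (Or.inl hx)).comp_hasFDerivAt x
    (EuclideanSpace.proj (𝕜 := ℝ) (Fin.last n)).hasFDerivAt
  exact (EuclideanSpace.proj (𝕜 := ℝ) i.castSucc).hasFDerivAt.mul hpow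

lemma differentiableAt_phiMap (hx : x (Fin.last n) ≠ 0) :
    DifferentiableAt ℝ (phiMap n γi a) x := by
  refine differentiableAt_piLp 2 |>.2 fun j => ?_
  induction j using Fin.lastCases with
  | last => exact (hasFDerivAt_phiMap_last hx).differentiableAt
  | cast i => exact (hasFDerivAt_phiMap_castSucc hx i).differentiableAt

end Derivative

section Bounds

variable {n : ℕ} {γi : Fin n → ℝ} {a : ℝ} {x : EuclideanSpace ℝ (Fin (n + 1))}

lemma sq_fderiv_phiMap_apply_last_le (hx : x (Fin.last n) ≠ 0)
    (v : EuclideanSpace ℝ (Fin (n + 1))) :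
    fderiv ℝ (phiMap n γi a) x v (Fin.last n) ^ 2 ≤
      a ^ 2 * (x (Fin.last n) ^ (a - 1)) ^ 2 * ‖v‖ ^ 2 := by
  rw [fderiv_apply_of_hasFDerivAt_apply (differentiableAt_phiMap hx) (hasFDerivAt_phiMap_last hx)]
  calc ((a * x (Fin.last n) ^ (a - 1)) • EuclideanSpace.proj (𝕜 := ℝ) (Fin.last n)) v ^ 2
      = a ^ 2 * (x (Fin.last n) ^ (a - 1)) ^ 2 * v (Fin.last n) ^ 2 := by
        simp only [FunLike.coe_smul, Pi.smul_apply, PiLp.proj_apply, smul_eq_mul]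
        ring
    _ ≤ _ := mul_le_mul_of_nonneg_left (EuclideanSpace.sq_apply_le_norm_sq v _) (by positivity)

lemma sq_fderiv_phiMap_apply_castSucc_le (hγi : ∀ i, 1 ≤ γi i) (ha : 0 ≤ a)
    (hx : x ∈ OmegaModel n) (i : Fin n) (v : EuclideanSpace ℝ (Fin (n + 1))) :
    fderiv ℝ (phiMap n γi a) x v i.castSucc ^ 2 ≤
      ((a * γi i - 1) ^ 2 + 1) * (x (Fin.last n) ^ (a - 1)) ^ 2 * ‖v‖ ^ 2 := by
  obtain ⟨ht0, ht1, hxi⟩ := hx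
  rw [fderiv_apply_of_hasFDerivAt_apply (differentiableAt_phiMap ht0.ne')
    (hasFDerivAt_phiMap_castSucc ht0.ne' i)]
  set t := x (Fin.last n)
  set e := a * γi i - 1
  set T := t ^ (a - 1)
  set A := x i.castSucc * (e * t ^ (e - 1))
  set B := t ^ e
  have hB : B ≤ T := Real.rpow_le_rpow_of_exponent_ge ht0 ht1.le (by nlinarith [hγi i])
  have hA : |A| ≤ |e| * T := by
    have hxt : x i.castSucc / t ≤ 1 := (div_le_one ht0).2 (hxi i).2.le
    have hA_eq : A = x i.castSucc / t * (e * B) := by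
      simp only [A, B]
      rw [Real.rpow_sub_one ht0.ne']
      ring
    calc |A| = x i.castSucc / t * (|e| * B) := by
          rw [hA_eq, abs_mul, abs_mul, abs_of_pos (div_pos (hxi i).1 ht0),
            abs_of_pos (by positivity : 0 < B)]
      _ ≤ 1 * (|e| * T) := by gcongr
      _ = |e| * T := one_mul _
  have hA2 : A ^ 2 ≤ e ^ 2 * T ^ 2 := by
    simpa only [sq_abs, mul_pow] using pow_le_pow_left₀ (abs_nonneg A) hA 2
  have hB2 : B ^ 2 ≤ T ^ 2 := pow_le_pow_left₀ (by positivity) hB 2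
  have hv := EuclideanSpace.sq_add_sq_le_norm_sq v (Fin.castSucc_lt_last i).ne'
  calc ((x i.castSucc • (e * t ^ (e - 1)) • EuclideanSpace.proj (𝕜 := ℝ) (Fin.last n) +
        B • EuclideanSpace.proj (𝕜 := ℝ) i.castSucc) v) ^ 2
      = (A * v (Fin.last n) + B * v i.castSucc) ^ 2 := by
        simp only [FunLike.coe_add, Pi.add_apply, FunLike.coe_smul, Pi.smul_apply,
          PiLp.proj_apply, smul_eq_mul, A]
        ring
    _ ≤ (A ^ 2 + B ^ 2) * (v (Fin.last n) ^ 2 + v i.castSucc ^ 2) := by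
        nlinarith [sq_nonneg (A * v i.castSucc - B * v (Fin.last n))]
    _ ≤ (e ^ 2 * T ^ 2 + T ^ 2) * ‖v‖ ^ 2 := by gcongr
    _ = (e ^ 2 + 1) * T ^ 2 * ‖v‖ ^ 2 := by ring

lemma norm_fderiv_phiMap_le (hγi : ∀ i, 1 ≤ γi i) (ha : 0 ≤ a) (hx : x ∈ OmegaModel n) :
    ‖fderiv ℝ (phiMap n γi a) x‖ ≤
      √((∑ i, (a * γi i - 1) ^ 2) + n + a ^ 2) * x (Fin.last n) ^ (a - 1) := by
  set T := x (Fin.last n) ^ (a - 1)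
  have hrows : ∀ v j, fderiv ℝ (phiMap n γi a) x v j ^ 2 ≤
      Fin.lastCases (a ^ 2 * T ^ 2) (fun i => ((a * γi i - 1) ^ 2 + 1) * T ^ 2) j * ‖v‖ ^ 2 := by
    intro v j
    induction j using Fin.lastCases with
    | last => simpa only [Fin.lastCases_last] using sq_fderiv_phiMap_apply_last_le hx.1.ne' v
    | cast i =>
        simpa only [Fin.lastCases_castSucc] using
          sq_fderiv_phiMap_apply_castSucc_le hγi ha hx i v
  refine (ContinuousLinearMap.opNorm_le_sqrt_sum_of_sq_apply_le _ _ hrows).trans_eq ?_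
  have hsum : ∑ j, Fin.lastCases (a ^ 2 * T ^ 2) (fun i => ((a * γi i - 1) ^ 2 + 1) * T ^ 2) j =
      ((∑ i, (a * γi i - 1) ^ 2) + n + a ^ 2) * T ^ 2 := by
    simp only [Fin.sum_univ_castSucc, Fin.lastCases_last, Fin.lastCases_castSucc,
      ← Finset.sum_mul, Finset.sum_add_distrib, Finset.sum_const, Finset.card_univ,
      Fintype.card_fin, nsmul_eq_mul, mul_one]
    ring
  rw [hsum, Real.sqrt_mul' _ (sq_nonneg T), Real.sqrt_sq (Real.rpow_nonneg hx.1.le _)]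

lemma norm_fderiv_phiMap_pow_le (hγi : ∀ i, 1 ≤ γi i) (ha : 0 ≤ a) (hx : x ∈ OmegaModel n) :
    ‖fderiv ℝ (phiMap n γi a) x‖ ^ (n + 1) ≤
      ((∑ i, (a * γi i - 1) ^ 2) + n + a ^ 2) ^ ((n + 1 : ℝ) / 2) *
        x (Fin.last n) ^ ((a - 1) * (n + 1)) := by
  have hK : 0 ≤ (∑ i, (a * γi i - 1) ^ 2) + n + a ^ 2 := by positivity
  calc ‖fderiv ℝ (phiMap n γi a) x‖ ^ (n + 1)
      ≤ (√((∑ i, (a * γi i - 1) ^ 2) + n + a ^ 2) * x (Fin.last n) ^ (a - 1)) ^ (n + 1) :=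
        pow_le_pow_left₀ (norm_nonneg _) (norm_fderiv_phiMap_le hγi ha hx) _
    _ = _ := by
        rw [mul_pow, Real.sqrt_eq_rpow, ← Real.rpow_mul_natCast hK,
          ← Real.rpow_mul_natCast hx.1.le]
        push_cast
        ring_nf

end Bounds

section Integration

variable (n : ℕ)

def lastSplit : EuclideanSpace ℝ (Fin (n + 1)) ≃ᵐ ℝ × (Fin n → ℝ) :=
  (MeasurableEquiv.toLp 2 (Fin (n + 1) → ℝ)).symm.trans
    (MeasurableEquiv.piFinSuccAbove (fun _ => ℝ) (Fin.last n))

lemma measurePreserving_lastSplit : MeasurePreserving (lastSplit n) :=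
  (EuclideanSpace.volume_preserving_symm_measurableEquiv_toLp _).trans
    (volume_preserving_piFinSuccAbove (fun _ => ℝ) (Fin.last n))

def omegaModelProd : Set (ℝ × (Fin n → ℝ)) :=
  {p | p.1 ∈ Set.Ioo 0 1 ∧ p.2 ∈ Set.univ.pi fun _ => Set.Ioo 0 p.1}

lemma omegaModel_eq_preimage_lastSplit : OmegaModel n = lastSplit n ⁻¹' omegaModelProd n := by
  ext x
  simp [OmegaModel, omegaModelProd, lastSplit, MeasurableEquiv.piFinSuccAbove_apply,
    Fin.init, and_assoc]

lemma measurableSet_omegaModelProd : MeasurableSet (omegaModelProd n) := by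
  unfold omegaModelProd
  measurability

lemma measurableSet_omegaModel : MeasurableSet (OmegaModel n) := by
  rw [omegaModel_eq_preimage_lastSplit]
  exact (lastSplit n).measurable (measurableSet_omegaModelProd n)

variable {n}

lemma lintegral_omegaModel_comp_last {g : ℝ → ℝ≥0∞} (hg : Measurable g) :
    ∫⁻ x in OmegaModel n, g (x (Fin.last n)) =
      ∫⁻ t in Set.Ioo 0 1, ENNReal.ofReal (t ^ n) * g t := by
  have hslice : ∀ t, ∫⁻ y, (omegaModelProd n).indicator (fun p => g p.1) (t, y) =
      (Set.Ioo 0 1).indicator (fun t => ENNReal.ofReal (t ^ n) * g t) t := by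
    intro t
    by_cases ht : t ∈ Set.Ioo 0 1
    · have hcube : (fun y => (omegaModelProd n).indicator (fun p => g p.1) (t, y)) =
          (Set.univ.pi fun _ => Set.Ioo 0 t).indicator fun _ => g t := by
        ext y
        simp [Set.indicator, omegaModelProd, ht.1, ht.2]
      rw [hcube, lintegral_indicator_const (MeasurableSet.univ_pi fun _ => measurableSet_Ioo),
        Set.indicator_of_mem ht, volume_pi_pi]
      simp [Real.volume_Ioo, ENNReal.ofReal_pow ht.1.le, mul_comm]
    · have hout : ∀ y, (t, y) ∉ omegaModelProd n := fun y h => ht h.1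
      simp [hout, ht]
  have hpre := (measurePreserving_lastSplit n).setLIntegral_comp_preimage_emb
    (lastSplit n).measurableEmbedding (fun p => g p.1) (omegaModelProd n)
  rw [← omegaModel_eq_preimage_lastSplit] at hpre
  refine hpre.trans ?_
  rw [Measure.volume_eq_prod, ← lintegral_indicator (measurableSet_omegaModelProd n),
    lintegral_prod ((omegaModelProd n).indicator fun p => g p.1)
      ((hg.comp measurable_fst).indicator (measurableSet_omegaModelProd n)).aemeasurable]
  simp only [hslice]
  exact lintegral_indicator measurableSet_Ioo _

lemma lintegral_omegaModel_rpow_last {c : ℝ} (hc : 0 < c + n + 1) :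
    ∫⁻ x in OmegaModel n, ENNReal.ofReal (x (Fin.last n) ^ c) =
      ENNReal.ofReal (1 / (c + n + 1)) := by
  rw [lintegral_omegaModel_comp_last (g := fun t => ENNReal.ofReal (t ^ c)) (by fun_prop)]
  have hmul : Set.EqOn (fun t : ℝ => ENNReal.ofReal (t ^ n) * ENNReal.ofReal (t ^ c))
      (fun t => ENNReal.ofReal (t ^ (c + n))) (Set.Ioo 0 1) := fun t ht => by
    dsimp only
    rw [← ENNReal.ofReal_mul (pow_nonneg ht.1.le n), ← Real.rpow_natCast, ← Real.rpow_add ht.1,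
      add_comm]
  have hint : IntegrableOn (fun t : ℝ => t ^ (c + n)) (Set.Ioo 0 1) :=
    (intervalIntegral.integrableOn_Ioo_rpow_iff zero_lt_one).2 (by linarith)
  rw [setLIntegral_congr_fun measurableSet_Ioo hmul, ← ofReal_integral_eq_lintegral_ofReal hint
    ((ae_restrict_iff' measurableSet_Ioo).2 (.of_forall fun t ht => Real.rpow_nonneg ht.1.le _)),
    ← integral_Ioc_eq_integral_Ioo, ← intervalIntegral.integral_of_le zero_le_one,
    integral_rpow (Or.inl (by linarith)), Real.one_rpow, Real.zero_rpow (by linarith)]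
  ring_nf

lemma rpow_last_nonneg_ae_omegaModel (c : ℝ) :
    0 ≤ᵐ[volume.restrict (OmegaModel n)] fun x => x (Fin.last n) ^ c :=
  (ae_restrict_iff' (measurableSet_omegaModel n)).2 <|
    .of_forall fun _ hx => Real.rpow_nonneg hx.1.le c

lemma integrableOn_omegaModel_rpow_last {c : ℝ} (hc : 0 < c + n + 1) :
    IntegrableOn (fun x => x (Fin.last n) ^ c) (OmegaModel n) := by
  refine ⟨(by fun_prop : Measurable fun x : EuclideanSpace ℝ (Fin (n + 1)) =>
    x (Fin.last n) ^ c).aestronglyMeasurable, ?_⟩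
  rw [hasFiniteIntegral_iff_ofReal (rpow_last_nonneg_ae_omegaModel c),
    lintegral_omegaModel_rpow_last hc]
  exact ENNReal.ofReal_lt_top

lemma setIntegral_omegaModel_rpow_last {c : ℝ} (hc : 0 < c + n + 1) :
    ∫ x in OmegaModel n, x (Fin.last n) ^ c = 1 / (c + n + 1) := by
  rw [integral_eq_lintegral_of_nonneg_ae (rpow_last_nonneg_ae_omegaModel c)
    (integrableOn_omegaModel_rpow_last hc).aestronglyMeasurable,
    lintegral_omegaModel_rpow_last hc, ENNReal.toReal_ofReal (by positivity)]

end Integration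

theorem statement3_general (n : ℕ) (γi : Fin n → ℝ) (hγi : ∀ i, 1 ≤ γi i)
    (a : ℝ) (ha : 0 < a) :
    IntegrableOn (fun x => ‖fderiv ℝ (phiMap n γi a) x‖ ^ (n + 1)) (OmegaModel n) volume ∧
    ∫ x in OmegaModel n, ‖fderiv ℝ (phiMap n γi a) x‖ ^ (n + 1) ≤
      ((∑ i, (a * γi i - 1) ^ 2) + n + a ^ 2) ^ ((n + 1 : ℝ) / 2) / ((n + 1) * a) := by
  set C := ((∑ i, (a * γi i - 1) ^ 2) + n + a ^ 2) ^ ((n + 1 : ℝ) / 2)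
  have hexp : (a - 1) * (n + 1) + n + 1 = (n + 1) * a := by ring
  have hexp_pos : 0 < (a - 1) * (n + 1) + n + 1 := by rw [hexp]; positivity
  have hbound : ∀ x ∈ OmegaModel n, ‖fderiv ℝ (phiMap n γi a) x‖ ^ (n + 1) ≤
      C * x (Fin.last n) ^ ((a - 1) * (n + 1)) :=
    fun x hx => norm_fderiv_phiMap_pow_le hγi ha.le hx
  have hmajor := (integrableOn_omegaModel_rpow_last hexp_pos).const_mul C
  have hint : IntegrableOn (fun x => ‖fderiv ℝ (phiMap n γi a) x‖ ^ (n + 1)) (OmegaModel n) :=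
    hmajor.mono' ((measurable_fderiv ℝ _).norm.pow_const _).aestronglyMeasurable <|
      (ae_restrict_iff' (measurableSet_omegaModel n)).2 <| .of_forall fun x hx => by
        rw [Real.norm_of_nonneg (by positivity)]
        exact hbound x hx
  refine ⟨hint, ?_⟩
  calc ∫ x in OmegaModel n, ‖fderiv ℝ (phiMap n γi a) x‖ ^ (n + 1)
      ≤ ∫ x in OmegaModel n, C * x (Fin.last n) ^ ((a - 1) * (n + 1)) :=
        setIntegral_mono_on hint hmajor (measurableSet_omegaModel n) hbound
    _ = C / ((n + 1) * a) := by
        rw [integral_const_mul, setIntegral_omegaModel_rpow_last hexp_pos, hexp, mul_one_div]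

/-- For every `a > 0`, the integral `∫_{Ω_n} ‖Dφ_a(x)‖^{n+1} dx` is finite
(the exponent is the dimension), and it is bounded by
`( Σ_i (aγ_i - 1)^2 + n + a^2 )^{(n+1)/2} / ((n+1)·a)`.
(Paper dimension `n` is Lean `n + 1`.) -/
theorem statement3 (n : ℕ) (hn : 1 ≤ n) (γi : Fin n → ℝ) (hγi : ∀ i, 1 ≤ γi i)
    (a : ℝ) (ha : 0 < a) :
    IntegrableOn (fun x => ‖fderiv ℝ (phiMap n γi a) x‖ ^ (n + 1)) (OmegaModel n) volume ∧
    ∫ x in OmegaModel n, ‖fderiv ℝ (phiMap n γi a) x‖ ^ (n + 1) ≤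
      ((∑ i, (a * γi i - 1) ^ 2) + n + a ^ 2) ^ ((n + 1 : ℝ) / 2) / ((n + 1) * a) :=
  statement3_general n γi hγi a ha
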